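/- Let d ≥ 2 and let σ_d : ℝ/ℤ → ℝ/ℤ be the map θ ↦ dθ. If x ∈ ℝ/ℤ is a point such that the chords of the closed unit disk connecting e^{2πi σ_d^i(x)} to e^{2πi σ_d^{i+1}(x)} for i = 0, 1, 2, … are pairwise unlinked (no two of them cross inside the open disk), then x is preperiodic under σ_d (i.e., there exist m ≥ 0 and n ≥ 1 with σ_d^{m+n}(x) = σ_d^m(x)). -/

import Mathlib

open Metric Set

noncomputable section

instance : Fact ((0:ℝ) < 1) := ⟨one_pos⟩

/-- The point on the unit circle in `ℂ` corresponding to `x ∈ ℝ/ℤ`, i.e. `exp(2πix)`. -/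
noncomputable def pt (x : AddCircle (1:ℝ)) : ℂ := (AddCircle.toCircle x : ℂ)

/-- The chord of the closed unit disk joining `pt a` and `pt b`. -/
noncomputable def chord (a b : AddCircle (1:ℝ)) : Set ℂ := segment ℝ (pt a) (pt b)

/-- The map `θ ↦ dθ` on `ℝ/ℤ`. -/
def sig (d : ℕ) (x : AddCircle (1:ℝ)) : AddCircle (1:ℝ) := d • x

/-- Two chords are linked (cross) if they are distinct and intersect in the open unit disk. -/
def Linked (a b x y : AddCircle (1:ℝ)) : Prop :=
  chord a b ≠ chord x y ∧ (chord a b ∩ chord x y ∩ Metric.ball (0:ℂ) 1).Nonempty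

/-- The representative of `x ∈ ℝ/ℤ` in `[0,1)`. -/
noncomputable def rep (x : AddCircle (1:ℝ)) : ℝ := ((AddCircle.equivIco 1 0) x : ℝ)

/-- The open positively oriented arc from `a` to `b`. -/
def arc (a b : AddCircle (1:ℝ)) : Set (AddCircle (1:ℝ)) :=
  {x | 0 < rep (x - a) ∧ rep (x - a) < rep (b - a)}

/-- The closed positively oriented arc from `a` to `b`. -/
def closedArc (a b : AddCircle (1:ℝ)) : Set (AddCircle (1:ℝ)) := arc a b ∪ {a, b}

/-- `(a,b)` is a hole of `A`: `a, b ∈ A` and the nonempty open arc `(a,b)` misses `A`. -/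
def IsHole (A : Set (AddCircle (1:ℝ))) (a b : AddCircle (1:ℝ)) : Prop :=
  a ∈ A ∧ b ∈ A ∧ (arc a b).Nonempty ∧ arc a b ∩ A = ∅

/-- The convex hull in `ℂ` of the set of circle points corresponding to `A ⊆ ℝ/ℤ`. -/
noncomputable def hull (A : Set (AddCircle (1:ℝ))) : Set ℂ := convexHull ℝ (pt '' A)

/-- `p, q, r` are distinct and in strict positive circular order. -/
def cyc (p q r : AddCircle (1:ℝ)) : Prop := 0 < rep (q - p) ∧ rep (q - p) < rep (r - p)

/-- A tuple of circle points is in (weak) positive circular order. -/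
def CircOrd {k : ℕ} [NeZero k] (v : Fin k → AddCircle (1:ℝ)) : Prop :=
  Monotone fun i => rep (v i - v 0)

/-!
Measure positions on the circle from `x₀ = x`. If two consecutive orbit points `x_m, x_{m+1}`
(`m ≥ i + 2`) were on opposite sides of the chord `x_i x_{i+1}`, their chord would cross it; so all
points after `x_{i+1}` lie on one side of that chord. Inductively, each `x_k` lies below all later
points or above all of them, and therefore the orbit accumulates at no more than two points.
Since `σ_d` multiplies small distances by `d ≥ 2`, an orbit accumulating only on a finite set must
eventually land in it, which makes `x` preperiodic.
-/

open Filter Function Topology Real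

lemma coe_rep (x : AddCircle (1:ℝ)) : ((rep x : ℝ) : AddCircle (1:ℝ)) = x :=
  AddCircle.coe_equivIco

lemma rep_mem_Ico (x : AddCircle (1:ℝ)) : rep x ∈ Ico (0:ℝ) 1 := by
  simpa [rep] using ((AddCircle.equivIco 1 0) x).2

lemma rep_coe (r : ℝ) : rep (r : AddCircle (1:ℝ)) = Int.fract r := by
  simp [rep]

lemma rep_injective : Injective rep := fun x y h => by
  rw [← coe_rep x, ← coe_rep y, h]

lemma rep_zero : rep 0 = 0 := by
  simpa using rep_coe 0

lemma rep_pos {x : AddCircle (1:ℝ)} (hx : x ≠ 0) : 0 < rep x :=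
  (rep_mem_Ico x).1.lt_of_ne fun h => hx (rep_injective (h.symm.trans rep_zero.symm))

lemma rep_sub (x y : AddCircle (1:ℝ)) : rep (x - y) = Int.fract (rep x - rep y) := by
  rw [← rep_coe, AddCircle.coe_sub, coe_rep, coe_rep]

/-- Points on one side of `p`, as seen from `o`, are ordered alike seen from `p` or from `o`. -/
lemma rep_sub_lt_rep_sub_iff {o p x y : AddCircle (1:ℝ)}
    (h : (rep (p - o) < rep (x - o) ∧ rep (p - o) < rep (y - o)) ∨
      (rep (x - o) < rep (p - o) ∧ rep (y - o) < rep (p - o))) :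
    rep (x - p) < rep (y - p) ↔ rep (x - o) < rep (y - o) := by
  have hx := rep_mem_Ico (x - o)
  have hy := rep_mem_Ico (y - o)
  have hp := rep_mem_Ico (p - o)
  rw [show x - p = (x - o) - (p - o) by abel, show y - p = (y - o) - (p - o) by abel,
    rep_sub (x - o), rep_sub (y - o)]
  rcases h with ⟨hpx, hpy⟩ | ⟨hxp, hyp⟩
  · rw [Int.fract_eq_self.2 ⟨by linarith, by linarith [hx.2, hp.1]⟩,
      Int.fract_eq_self.2 ⟨by linarith, by linarith [hy.2, hp.1]⟩, sub_lt_sub_iff_right]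
  · have hfract : ∀ r : ℝ, -1 ≤ r → r < 0 → Int.fract r = r + 1 := fun r h0 h1 =>
      Int.fract_eq_iff.2 ⟨by linarith, by linarith, -1, by push_cast; ring⟩
    rw [hfract _ (by linarith [hx.1, hp.2]) (by linarith),
      hfract _ (by linarith [hy.1, hp.2]) (by linarith)]
    constructor <;> intro h <;> linarith

lemma mem_arc_iff {a b x : AddCircle (1:ℝ)} (hx : x ≠ a) :
    x ∈ arc a b ↔ rep (x - a) < rep (b - a) :=
  and_iff_right (rep_pos (sub_ne_zero.2 hx))

section InnerProductSpace

variable {F : Type*} [NormedAddCommGroup F] [InnerProductSpace ℝ F]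

lemma norm_add_smul_sub_sq {a b : F} (ha : ‖a‖ = 1) (hb : ‖b‖ = 1) (s : ℝ) :
    ‖a + s • (b - a)‖ ^ 2 = 1 - s * (1 - s) * ‖b - a‖ ^ 2 := by
  rw [norm_add_sq_real, norm_smul, mul_pow, Real.norm_eq_abs, sq_abs, inner_smul_right,
    norm_sub_sq_real, inner_sub_right, real_inner_self_eq_norm_sq, real_inner_comm, ha, hb]
  ring

lemma add_smul_sub_mem_segment_of_norm_lt_one {a b : F} (ha : ‖a‖ = 1) (hb : ‖b‖ = 1) {s : ℝ}
    (hs : ‖a + s • (b - a)‖ < 1) : a + s • (b - a) ∈ segment ℝ a b := by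
  have hsq : ‖a + s • (b - a)‖ ^ 2 < 1 := by nlinarith [norm_nonneg (a + s • (b - a))]
  rw [norm_add_smul_sub_sq ha hb] at hsq
  have hs' : 0 < s * (1 - s) := pos_of_mul_pos_left (b := ‖b - a‖ ^ 2) (by linarith) (by positivity)
  rw [segment_eq_image']
  exact ⟨s, ⟨by nlinarith, by nlinarith⟩, rfl⟩

end InnerProductSpace

namespace Orientation

variable {E : Type*} [NormedAddCommGroup E] [InnerProductSpace ℝ E]
  [Fact (Module.finrank ℝ E = 2)] (o : Orientation ℝ E (Fin 2))

lemma eq_smul_of_areaForm_eq_zero {a x : E} (ha : a ≠ 0) (h : o.areaForm a x = 0) :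
    x = (inner ℝ a x / ‖a‖ ^ 2) • a := by
  have ha' : ‖a‖ ^ 2 ≠ 0 := by positivity
  refine ext_inner_right ℝ fun v => ?_
  have := o.inner_mul_inner_add_areaForm_mul_areaForm a x v
  rw [h, zero_mul, add_zero] at this
  rw [real_inner_smul_left, div_mul_eq_mul_div, eq_div_iff ha']
  linarith

lemma areaForm_sub_eq_zero_of_mem_segment {a b z : E} (hz : z ∈ segment ℝ a b) :
    o.areaForm (b - a) (z - a) = 0 := by
  rw [segment_eq_image'] at hz
  obtain ⟨t, -, rfl⟩ := hz
  rw [add_sub_cancel_left, map_smul, o.areaForm_apply_self, smul_zero]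

theorem nonempty_segment_inter_segment_inter_ball {a b c e : E} (ha : ‖a‖ = 1) (hb : ‖b‖ = 1)
    (hc : ‖c‖ ≤ 1) (he : ‖e‖ ≤ 1) (hac : o.areaForm (b - a) (c - a) < 0)
    (hae : 0 < o.areaForm (b - a) (e - a)) :
    (segment ℝ a b ∩ segment ℝ c e ∩ ball 0 1).Nonempty := by
  set fc := o.areaForm (b - a) (c - a)
  set fe := o.areaForm (b - a) (e - a)
  set t := fc / (fc - fe)
  have ht : t ∈ Ioo (0:ℝ) 1 :=
    ⟨div_pos_of_neg_of_neg hac (by linarith), (div_lt_one_of_neg (by linarith)).2 (by linarith)⟩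
  set z := c + t • (e - c)
  have hz_seg : z ∈ openSegment ℝ c e := by
    rw [openSegment_eq_image']
    exact ⟨t, ht, rfl⟩
  have hce : c ≠ e := by
    rintro rfl
    exact lt_asymm hac hae
  have hz_ball : z ∈ ball (0:E) 1 := by
    rw [← interior_closedBall (0:E) one_ne_zero]
    exact (strictConvex_closedBall ℝ (0:E) 1).openSegment_subset (by simpa using hc)
      (by simpa using he) hce hz_seg
  have hz_line : o.areaForm (b - a) (z - a) = 0 := by
    have : z - a = (c - a) + t • ((e - a) - (c - a)) := by simp only [z]; module
    rw [this, map_add, map_smul, smul_eq_mul, (o.areaForm (b - a)).map_sub (e - a) (c - a)]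
    change fc + fc / (fc - fe) * (fe - fc) = 0
    have hden : fc - fe ≠ 0 := (by linarith : fc - fe < 0).ne
    field_simp
    ring
  have hab : b - a ≠ 0 := by
    intro h
    simp [fc, h] at hac
  have hz_eq : z = a + (inner ℝ (b - a) (z - a) / ‖b - a‖ ^ 2) • (b - a) := by
    rw [← o.eq_smul_of_areaForm_eq_zero hab hz_line]
    abel
  refine ⟨z, ⟨?_, openSegment_subset_segment ℝ c e hz_seg⟩, hz_ball⟩
  rw [mem_ball_zero_iff, hz_eq] at hz_ball
  rw [hz_eq]
  exact add_smul_sub_mem_segment_of_norm_lt_one ha hb hz_ball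

end Orientation

attribute [local instance] Complex.finrank_real_complex_fact

local notation "ω" => Complex.orientation.areaForm

lemma norm_pt (x : AddCircle (1:ℝ)) : ‖pt x‖ = 1 :=
  Circle.norm_coe _

lemma pt_add (x y : AddCircle (1:ℝ)) : pt (x + y) = pt x * pt y := by
  simp [pt, AddCircle.toCircle_add]

lemma pt_coe (r : ℝ) : pt r = Complex.exp ((2 * π * r : ℝ) * Complex.I) := by
  simp [pt, AddCircle.toCircle_apply_mk, Circle.coe_exp]

lemma four_mul_sin_mul_sin_mul_sin_sub (u v : ℝ) :
    4 * sin u * sin v * sin (u - v) =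
      (cos (2 * v) - 1) * sin (2 * u) - sin (2 * v) * (cos (2 * u) - 1) := by
  rw [Real.sin_two_mul, Real.sin_two_mul, Real.cos_two_mul, Real.cos_two_mul, Real.sin_sub]
  linear_combination 4 * sin v * cos v * Real.sin_sq_add_cos_sq u -
    4 * sin u * cos u * Real.sin_sq_add_cos_sq v

lemma areaForm_exp_sub_one (θ φ : ℝ) :
    ω (Complex.exp (θ * Complex.I) - 1) (Complex.exp (φ * Complex.I) - 1) =
      (cos θ - 1) * sin φ - sin θ * (cos φ - 1) := by
  rw [Complex.areaForm]
  simp only [Complex.mul_im, map_sub, map_one, Complex.sub_re, Complex.sub_im,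
    Complex.conj_re, Complex.conj_im, Complex.one_re, Complex.one_im,
    Complex.exp_ofReal_mul_I_re, Complex.exp_ofReal_mul_I_im]
  ring

lemma areaForm_pt_sub_pt (a b c : AddCircle (1:ℝ)) :
    ω (pt b - pt a) (pt c - pt a) =
      4 * sin (π * rep (c - a)) * sin (π * rep (b - a)) *
        sin (π * rep (c - a) - π * rep (b - a)) := by
  have hpt : ∀ y,
      pt y - pt a = pt a * (Complex.exp ((2 * π * rep (y - a) : ℝ) * Complex.I) - 1) := by
    intro y
    rw [mul_sub, mul_one, ← pt_coe, coe_rep, ← pt_add, add_sub_cancel]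
  have hnorm : (starRingEnd ℂ) (pt a) * pt a = 1 := by
    rw [Complex.conj_mul', norm_pt]; simp
  rw [hpt, hpt, Complex.areaForm, map_mul, mul_mul_mul_comm, hnorm, one_mul, ← Complex.areaForm,
    areaForm_exp_sub_one, four_mul_sin_mul_sin_mul_sin_sub]
  ring_nf

lemma sin_pi_mul_pos {x : ℝ} (h0 : 0 < x) (h1 : x < 1) : 0 < sin (π * x) :=
  Real.sin_pos_of_pos_of_lt_pi (by positivity) (by nlinarith [Real.pi_pos])

lemma areaForm_pt_sub_pt_neg {a b c : AddCircle (1:ℝ)} (h : cyc a c b) :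
    ω (pt b - pt a) (pt c - pt a) < 0 := by
  obtain ⟨hc, hcb⟩ := h
  have hb := (rep_mem_Ico (b - a)).2
  rw [areaForm_pt_sub_pt, ← mul_sub]
  have hneg : sin (π * (rep (c - a) - rep (b - a))) < 0 :=
    Real.sin_neg_of_neg_of_neg_pi_lt (by nlinarith [Real.pi_pos])
      (by nlinarith [Real.pi_pos, (rep_mem_Ico (c - a)).1])
  have := mul_pos (sin_pi_mul_pos hc (by linarith)) (sin_pi_mul_pos (hc.trans hcb) hb)
  nlinarith

lemma areaForm_pt_sub_pt_pos {a b c : AddCircle (1:ℝ)} (h : cyc a b c) :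
    0 < ω (pt b - pt a) (pt c - pt a) := by
  obtain ⟨hb, hbc⟩ := h
  have hc := (rep_mem_Ico (c - a)).2
  rw [areaForm_pt_sub_pt, ← mul_sub]
  have := mul_pos (sin_pi_mul_pos (hb.trans hbc) hc) (sin_pi_mul_pos hb (by linarith))
  have := sin_pi_mul_pos (sub_pos.2 hbc) (by linarith [(rep_mem_Ico (b - a)).1])
  nlinarith

lemma chord_comm (a b : AddCircle (1:ℝ)) : chord a b = chord b a :=
  segment_symm ℝ _ _

lemma linked_comm_right {a b c e : AddCircle (1:ℝ)} : Linked a b c e ↔ Linked a b e c := by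
  rw [Linked, Linked, chord_comm c]

theorem linked_of_cyc {a b c e : AddCircle (1:ℝ)} (hc : cyc a c b) (he : cyc a b e) :
    Linked a b c e := by
  have hneg := areaForm_pt_sub_pt_neg hc
  refine ⟨fun h => hneg.ne (Complex.orientation.areaForm_sub_eq_zero_of_mem_segment ?_), ?_⟩
  · change pt c ∈ chord a b
    exact h ▸ left_mem_segment ℝ (pt c) (pt e)
  · exact Complex.orientation.nonempty_segment_inter_segment_inter_ball (norm_pt a) (norm_pt b)
      (norm_pt c).le (norm_pt e).le hneg (areaForm_pt_sub_pt_pos he)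

lemma linked_of_mem_arc_of_not_mem_closedArc {a b c e : AddCircle (1:ℝ)} (hc : c ∈ arc a b)
    (he : e ∉ closedArc a b) : Linked a b c e := by
  simp only [closedArc, mem_union, mem_insert_iff, mem_singleton_iff, not_or] at he
  obtain ⟨he_arc, hea, heb⟩ := he
  rw [mem_arc_iff hea, not_lt] at he_arc
  refine linked_of_cyc hc ⟨hc.1.trans hc.2, he_arc.lt_of_ne fun h => heb ?_⟩
  simpa using rep_injective h.symm

section UnlinkedSequence

variable {z : ℕ → AddCircle (1:ℝ)}

lemma mem_arc_iff_of_unlinked (hz : Injective z)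
    (hunl : ∀ i j : ℕ, i ≠ j → ¬ Linked (z i) (z (i+1)) (z j) (z (j+1))) {i m : ℕ}
    (hm : i + 2 ≤ m) : z m ∈ arc (z i) (z (i+1)) ↔ z (i+2) ∈ arc (z i) (z (i+1)) := by
  induction m, hm using Nat.le_induction with
  | base => rfl
  | succ m hm ih =>
    rw [← ih]
    have hend : ∀ n, i + 2 ≤ n → z n ∉ ({z i, z (i+1)} : Set _) := by
      intro n hn
      simp only [mem_insert_iff, mem_singleton_iff, hz.eq_iff]
      omega
    constructor
    · intro hsucc
      by_contra hcur
      exact hunl i m (by omega) (linked_comm_right.2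
        (linked_of_mem_arc_of_not_mem_closedArc hsucc fun h => h.elim hcur (hend m hm)))
    · intro hcur
      by_contra hsucc
      exact hunl i m (by omega)
        (linked_of_mem_arc_of_not_mem_closedArc hcur fun h => h.elim hsucc (hend _ (by omega)))

lemma forall_lt_or_forall_gt_of_unlinked (hz : Injective z)
    (hunl : ∀ i j : ℕ, i ≠ j → ¬ Linked (z i) (z (i+1)) (z j) (z (j+1))) (k : ℕ) :
    (∀ m, k < m → rep (z k - z 0) < rep (z m - z 0)) ∨
      (∀ m, k < m → rep (z m - z 0) < rep (z k - z 0)) := by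
  induction k with
  | zero =>
    left
    intro m hm
    rw [sub_self, rep_zero]
    exact rep_pos (sub_ne_zero.2 (hz.ne hm.ne'))
  | succ k ih =>
    have hside : ∀ m, k < m → (rep (z m - z k) < rep (z (k+1) - z k) ↔
        rep (z m - z 0) < rep (z (k+1) - z 0)) := fun m hm =>
      rep_sub_lt_rep_sub_iff (ih.imp (fun h => ⟨h m hm, h (k+1) k.lt_succ_self⟩)
        (fun h => ⟨h m hm, h (k+1) k.lt_succ_self⟩))
    have htail : ∀ m, k + 2 ≤ m → (rep (z m - z 0) < rep (z (k+1) - z 0) ↔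
        rep (z (k+2) - z 0) < rep (z (k+1) - z 0)) := by
      intro m hm
      rw [← hside m (by omega), ← hside (k+2) (by omega), ← mem_arc_iff (hz.ne (by omega)),
        ← mem_arc_iff (hz.ne (by omega))]
      exact mem_arc_iff_of_unlinked hz hunl hm
    by_cases h : rep (z (k+2) - z 0) < rep (z (k+1) - z 0)
    · exact Or.inr fun m hm => (htail m hm).2 h
    · refine Or.inl fun m hm => (not_lt.1 (mt (htail m hm).1 h)).lt_of_ne fun he => ?_
      have := rep_injective he
      rw [sub_left_inj, hz.eq_iff] at this
      omega

end UnlinkedSequence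

lemma exists_eventually_dist_lt_of_forall_le {u : ℕ → ℝ} (hu : BddAbove (range u)) :
    ∃ A, ∀ ε > 0, ∀ᶠ k in atTop, (∀ m, k < m → u k ≤ u m) → dist (u k) A < ε := by
  set L := {k | ∀ m, k < m → u k ≤ u m}
  rcases L.eq_empty_or_nonempty with hL | hL
  · exact ⟨0, fun ε _ => Eventually.of_forall fun k hk => absurd (hL.subset hk) id⟩
  refine ⟨sSup (u '' L), fun ε hε => ?_⟩
  obtain ⟨_, ⟨k₀, hk₀, rfl⟩, hlt⟩ := exists_lt_of_lt_csSup (hL.image u) (sub_lt_self _ hε)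
  filter_upwards [eventually_gt_atTop k₀] with k hk hkL
  have := le_csSup (hu.mono (image_subset_range u L)) (mem_image_of_mem u hkL)
  rw [Real.dist_eq, abs_lt]
  constructor <;> linarith [hk₀ k hk]

lemma exists_eventually_near_two_of_forall_le_or_forall_ge {u : ℕ → ℝ}
    (hua : BddAbove (range u)) (hub : BddBelow (range u))
    (h : ∀ k, (∀ m, k < m → u k ≤ u m) ∨ (∀ m, k < m → u m ≤ u k)) :
    ∃ A B, ∀ ε > 0, ∀ᶠ k in atTop, dist (u k) A < ε ∨ dist (u k) B < ε := by
  obtain ⟨A, hA⟩ := exists_eventually_dist_lt_of_forall_le hua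
  obtain ⟨b, hb⟩ := hub
  obtain ⟨B, hB⟩ := exists_eventually_dist_lt_of_forall_le (u := -u)
    ⟨-b, by rintro _ ⟨k, rfl⟩; exact neg_le_neg (hb ⟨k, rfl⟩)⟩
  refine ⟨A, -B, fun ε hε => ?_⟩
  filter_upwards [hA ε hε, hB ε hε] with k hkA hkB
  refine (h k).imp hkA fun hk => ?_
  have := hkB fun m hm => neg_le_neg (hk m hm)
  rwa [Pi.neg_apply, dist_neg] at this

lemma AddCircle.dist_coe_le {p : ℝ} (x y : ℝ) : dist (x : AddCircle p) y ≤ dist x y := by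
  rw [dist_eq_norm, dist_eq_norm, ← AddCircle.coe_sub]
  exact QuotientAddGroup.norm_mk_le_norm

theorem exists_eventually_near_two_of_unlinked {z : ℕ → AddCircle (1:ℝ)} (hz : Injective z)
    (hunl : ∀ i j : ℕ, i ≠ j → ¬ Linked (z i) (z (i+1)) (z j) (z (j+1))) :
    ∃ P Q : AddCircle (1:ℝ), ∀ ε > 0, ∀ᶠ m in atTop, dist (z m) P < ε ∨ dist (z m) Q < ε := by
  obtain ⟨A, B, hAB⟩ := exists_eventually_near_two_of_forall_le_or_forall_ge
    (u := fun m => rep (z m - z 0))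
    ⟨1, by rintro _ ⟨m, rfl⟩; exact (rep_mem_Ico _).2.le⟩
    ⟨0, by rintro _ ⟨m, rfl⟩; exact (rep_mem_Ico _).1⟩
    fun k => (forall_lt_or_forall_gt_of_unlinked hz hunl k).imp
      (fun h m hm => (h m hm).le) (fun h m hm => (h m hm).le)
  have hclose : ∀ m (r : ℝ), dist (z m) (z 0 + r) ≤ dist (rep (z m - z 0)) r := fun m r => by
    conv_lhs => rw [← add_sub_cancel (z 0) (z m), ← coe_rep (z m - z 0)]
    rw [dist_add_left]
    exact AddCircle.dist_coe_le _ _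
  refine ⟨z 0 + A, z 0 + B, fun ε hε => (hAB ε hε).mono fun m hm => ?_⟩
  exact hm.imp (hclose m A).trans_lt (hclose m B).trans_lt

lemma Set.Finite.exists_pos_forall_mul_lt_dist {X : Type*} [MetricSpace X] {F : Set X}
    (hF : F.Finite) (f : X → X) (K : ℝ) {δ : ℝ} (hδ : 0 < δ) :
    ∃ ε, 0 < ε ∧ ε < δ ∧ ∀ p ∈ F, ∀ q ∈ F, f p ≠ q → K * ε < dist (f p) q := by
  have hsmall : ∀ᶠ ε in 𝓝 (0:ℝ), ε < δ ∧ ∀ p ∈ F, ∀ q ∈ F, f p ≠ q → K * ε < dist (f p) q := by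
    refine (eventually_lt_nhds hδ).and ((hF.eventually_all).2 fun p _ =>
      (hF.eventually_all).2 fun q _ => ?_)
    by_cases hpq : f p = q
    · exact Eventually.of_forall fun _ h => absurd hpq h
    · have : Tendsto (fun ε => K * ε) (𝓝 0) (𝓝 0) :=
        (continuous_const.mul continuous_id).tendsto' 0 0 (mul_zero _)
      exact (this.eventually (eventually_lt_nhds (dist_pos.2 hpq))).mono fun _ h _ => h
  obtain ⟨ε, hε, hpos⟩ := ((hsmall.filter_mono nhdsWithin_le_nhds).and
    (self_mem_nhdsWithin : ∀ᶠ ε in 𝓝[>] (0:ℝ), ε ∈ Ioi 0)).exists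
  exact ⟨ε, hpos, hε⟩

/-- Near `F` the orbit is shadowed by an orbit inside `F` (this fixes the choice of `ε`), and the
distance to the shadow is multiplied by `c` at each step while staying below `ε`, so it is `0`. -/
theorem eventually_mem_of_forall_eventually_near {X : Type*} [MetricSpace X] {f : X → X}
    {c δ : ℝ} (hc : 1 < c) (hδ : 0 < δ) (hf : ∀ a b, dist a b < δ → dist (f a) (f b) = c * dist a b)
    {F : Set X} (hF : F.Finite) {x : X}
    (h : ∀ ε > 0, ∀ᶠ m in atTop, ∃ p ∈ F, dist (f^[m] x) p < ε) :
    ∀ᶠ m in atTop, f^[m] x ∈ F := by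
  obtain ⟨ε, hε, hεδ, hεF⟩ := hF.exists_pos_forall_mul_lt_dist f (c + 1) hδ
  obtain ⟨M, hM⟩ := eventually_atTop.1 (h ε hε)
  choose q hqF hq using fun j => hM (M + j) (Nat.le_add_right M j)
  have hstep : ∀ j, f^[M + (j + 1)] x = f (f^[M + j] x) := fun j =>
    Function.iterate_succ_apply' f (M + j) x
  have hshadow : ∀ j, f (q j) = q (j + 1) := by
    intro j
    by_contra hne
    have h1 := hεF _ (hqF j) _ (hqF (j + 1)) hne
    have h2 : dist (f (q j)) (f^[M + (j + 1)] x) = c * dist (q j) (f^[M + j] x) := by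
      rw [hstep]
      exact hf _ _ (by rw [dist_comm]; linarith [hq j])
    have h3 := dist_triangle (f (q j)) (f^[M + (j + 1)] x) (q (j + 1))
    rw [dist_comm (q j)] at h2
    nlinarith [hq j, hq (j + 1)]
  have hgrow : ∀ j, dist (f^[M + j] x) (q j) = c ^ j * dist (f^[M] x) (q 0) := by
    intro j
    induction j with
    | zero => simp
    | succ j ih => rw [hstep, ← hshadow, hf _ _ ((hq j).trans hεδ), ih, pow_succ]; ring
  have hzero : dist (f^[M] x) (q 0) = 0 := by
    by_contra hne
    have hpos := lt_of_le_of_ne dist_nonneg (Ne.symm hne)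
    obtain ⟨j, hj⟩ := pow_unbounded_of_one_lt (ε / dist (f^[M] x) (q 0)) hc
    rw [div_lt_iff₀ hpos] at hj
    linarith [hq j, hgrow j]
  refine eventually_atTop.2 ⟨M, fun m hm => ?_⟩
  obtain ⟨j, rfl⟩ := Nat.exists_eq_add_of_le hm
  have := hgrow j
  rw [hzero, mul_zero, dist_eq_zero] at this
  exact this ▸ hqF j

lemma exists_coe_eq_abs_eq_norm (v : AddCircle (1:ℝ)) :
    ∃ r : ℝ, (r : AddCircle (1:ℝ)) = v ∧ |r| = ‖v‖ := by
  induction v using QuotientAddGroup.induction_on with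
  | H y => exact ⟨y - round y, by simp, by simp [UnitAddCircle.norm_eq]⟩

lemma dist_sig_sig {d : ℕ} {a b : AddCircle (1:ℝ)} (h : dist a b < 1 / (2 * d)) :
    dist (sig d a) (sig d b) = d * dist a b := by
  obtain ⟨r, hr, hnorm⟩ := exists_coe_eq_abs_eq_norm (a - b)
  have hsmall : (d:ℝ) * |r| ≤ 1 / 2 := by
    rcases Nat.eq_zero_or_pos d with rfl | hd
    · norm_num
    · rw [hnorm, ← dist_eq_norm]
      rw [lt_div_iff₀ (by positivity)] at h
      linarith
  rw [dist_eq_norm, dist_eq_norm, sig, sig, ← smul_sub, ← hr, ← AddCircle.coe_nsmul,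
    nsmul_eq_mul, (AddCircle.norm_coe_eq_abs_iff (1:ℝ) one_ne_zero).2 (by
      rw [abs_mul, Nat.abs_cast, abs_one]; exact hsmall), abs_mul, Nat.abs_cast, hnorm, hr]

lemma exists_iterate_add_eq_of_not_injective {α : Type*} {f : α → α} {x : α}
    (h : ¬ Injective fun n => f^[n] x) : ∃ m n : ℕ, 1 ≤ n ∧ f^[m + n] x = f^[m] x := by
  simp only [Injective, not_forall] at h
  obtain ⟨i, j, hij, hne⟩ := h
  wlog hlt : i < j generalizing i j
  · exact this j i hij.symm (Ne.symm hne) (by omega)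
  exact ⟨i, j - i, by omega, by rw [Nat.add_sub_cancel' hlt.le]; exact hij.symm⟩

/-- if the chords joining consecutive points of the forward
orbit of `x` under `σ_d` are pairwise unlinked, then `x` is preperiodic. -/
theorem stmt_0 (d : ℕ) (hd : 2 ≤ d) (x : AddCircle (1:ℝ))
    (hunlinked : ∀ i j : ℕ, i ≠ j →
      ¬ Linked ((sig d)^[i] x) ((sig d)^[i+1] x) ((sig d)^[j] x) ((sig d)^[j+1] x)) :
    ∃ m n : ℕ, 1 ≤ n ∧ (sig d)^[m + n] x = (sig d)^[m] x := by
  by_contra hpre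
  have hinj : Injective fun n => (sig d)^[n] x :=
    by_contra fun hinj => hpre (exists_iterate_add_eq_of_not_injective hinj)
  obtain ⟨P, Q, hPQ⟩ := exists_eventually_near_two_of_unlinked hinj hunlinked
  have hd' : (1:ℝ) < d := by exact_mod_cast hd
  have hF := eventually_mem_of_forall_eventually_near hd' (by positivity)
    (fun _ _ => dist_sig_sig) (toFinite {P, Q}) fun ε hε => (hPQ ε hε).mono fun _ hm =>
      hm.elim (fun h => ⟨P, by simp, h⟩) (fun h => ⟨Q, by simp, h⟩)
  obtain ⟨M, hM⟩ := eventually_atTop.1 hF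
  exact (infinite_of_injective_forall_mem (hinj.comp (add_right_injective M))
    fun j => hM (M + j) (Nat.le_add_right M j)) (toFinite _)
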